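/- arXiv:math/0403267 — 2 statements merged into one kernel-verified Lean document; each statement's English description precedes it below -/
import Mathlib

section
/- For the random walk P_{α,q} on the homogeneous tree T_q with 1/2 < α < 1 and β = (1-α)/α, the function x ↦ φ(x) given by φ(x) = (β^{d(x,y)}/q^{∇}) · ( (qβ⁻¹+1)/(qβ⁻²-1) + (β^{-Δ}-1)/(β⁻¹-1) + (β^{-∇}-1)/(β⁻¹-1) ), where Δ = Δ(x,y) and ∇ = ∇(x,y) are the number of upward and downward steps from x to y, is P_{α,q}-harmonic in x for each fixed vertex y. -/
/-!
Both `Δ(x, y)` and `∇(x, y)` are read off the first meeting point of the predecessor orbits of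
`x` and `y`, and `φ(x)` is a function `f(Δ, ∇)` of them. Relative to `y` a vertex `x` is in one
of three positions, and each gives one recurrence for `f`:
* `Δ ≥ 1`: the parent has `(Δ - 1, ∇)` and all `q` children have `(Δ + 1, ∇)`;
* `x` a strict ancestor of `y`: the parent has `(0, ∇ + 1)`, the child towards `y` has
  `(0, ∇ - 1)` and the other `q - 1` children have `(1, ∇)`;
* `x = y`: the parent has `(0, 1)` and all children have `(1, 0)`.
Up to the factor `q^{-∇}`, `f(a, n)` is a combination of `β^a`, `β^n` and `β^(a+n)`. The
first recurrence holds because `β` is the root `≠ 1` of `α t² - t + (1 - α)`; the other two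
hold because of the choice of the constant `(qβ⁻¹ + 1)/(qβ⁻² - 1) = β (q + β)/(q - β²)`.
-/

open Classical

/-- n-step transition probabilities of a Markov kernel. -/
noncomputable def nstep {X : Type*} (p : X → X → ℝ) : ℕ → X → X → ℝ
  | 0, x, y => if x = y then 1 else 0
  | (n+1), x, y => ∑' z, nstep p n x z * p z y

/-- Green function. -/
noncomputable def green {X : Type*} (p : X → X → ℝ) (x y : X) : ℝ :=
  ∑' n, nstep p n x y

/-- Probability that the chain started at `a` ever visits `b`
(sum of weights of paths hitting `b` for the first time at the last step). -/
noncomputable def hitProb {X : Type*} (p : X → X → ℝ) (a b : X) : ℝ :=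
  ∑' n : ℕ, ∑' g : {g : Fin (n+1) → X //
      g 0 = a ∧ g (Fin.last n) = b ∧ ∀ j, j ≠ Fin.last n → g j ≠ b},
    ∏ i : Fin n, p (g.1 i.castSucc) (g.1 i.succ)

/-- Probability that the chain started at `a` visits `b` before ever visiting `c`. -/
noncomputable def hitBefore {X : Type*} (p : X → X → ℝ) (a b c : X) : ℝ :=
  ∑' n : ℕ, ∑' g : {g : Fin (n+1) → X //
      g 0 = a ∧ g (Fin.last n) = b ∧ (∀ j, j ≠ Fin.last n → g j ≠ b) ∧ ∀ j, g j ≠ c},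
    ∏ i : Fin n, p (g.1 i.castSucc) (g.1 i.succ)

/-- The homogeneous tree `T_q` with a fixed reference end, encoded by the
predecessor ("one step towards the end") map. -/
structure TreeWithEnd (q : ℕ) where
  V : Type
  countable : Countable V
  pred : V → V
  fiber_card : ∀ x : V, Nat.card {y : V // pred y = x} = q
  acyclic : ∀ (x : V) (n : ℕ), 0 < n → pred^[n] x ≠ x
  connected : ∀ x y : V, ∃ m n : ℕ, pred^[m] x = pred^[n] y

/-- Number of upward steps Δ(x,y) from `x` to the confluent `x ⋏ y`. -/
noncomputable def TreeWithEnd.up {q : ℕ} (T : TreeWithEnd q) (x y : T.V) : ℕ :=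
  sInf {m : ℕ | ∃ n : ℕ, T.pred^[m] x = T.pred^[n] y}

/-- Number of downward steps ∇(x,y) = Δ(y,x). -/
noncomputable def TreeWithEnd.down {q : ℕ} (T : TreeWithEnd q) (x y : T.V) : ℕ :=
  T.up y x

/-- Busemann function (horocycle index) with respect to the base point `o`. -/
noncomputable def TreeWithEnd.hor {q : ℕ} (T : TreeWithEnd q) (o x : T.V) : ℤ :=
  (T.down o x : ℤ) - (T.up o x : ℤ)

/-- The graph structure of the tree. -/
def TreeWithEnd.graph {q : ℕ} (T : TreeWithEnd q) : SimpleGraph T.V :=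
  SimpleGraph.fromRel (fun x y => T.pred x = y)

/-- Transition probabilities of the random walk `P_{α,q}` on `T_q`. -/
noncomputable def treeWalk {q : ℕ} (T : TreeWithEnd q) (α : ℝ) : T.V → T.V → ℝ :=
  fun x y => if T.pred y = x then α / q else if y = T.pred x then 1 - α else 0

namespace TreeWithEnd

variable {q : ℕ} (T : TreeWithEnd q)

theorem iterate_pred_injective (x : T.V) : Function.Injective fun n => T.pred^[n] x := by
  intro a b h
  simp only at h
  by_contra hab
  wlog hlt : a < b generalizing a b
  · exact this h.symm (Ne.symm hab) (by omega)
  apply T.acyclic (T.pred^[a] x) (b - a) (by omega)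
  rw [← Function.iterate_add_apply, Nat.sub_add_cancel hlt.le, ← h]

theorem sub_eq_sub_of_iterate_eq {x y : T.V} {m n m' n' : ℕ}
    (h : T.pred^[m] x = T.pred^[n] y) (h' : T.pred^[m'] x = T.pred^[n'] y) :
    (m : ℤ) - n = m' - n' := by
  have : T.pred^[n + m'] y = T.pred^[n' + m] y :=
    calc T.pred^[n + m'] y = T.pred^[m'] (T.pred^[m] x) := by
          rw [add_comm, Function.iterate_add_apply, h]
      _ = T.pred^[m] (T.pred^[n'] y) := by
          rw [← h', ← Function.iterate_add_apply, add_comm, Function.iterate_add_apply]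
      _ = T.pred^[n' + m] y := by rw [← Function.iterate_add_apply, add_comm]
  have := T.iterate_pred_injective y this
  omega

theorem up_le_of_iterate_eq {x y : T.V} {m n : ℕ} (h : T.pred^[m] x = T.pred^[n] y) :
    T.up x y ≤ m :=
  Nat.sInf_le ⟨n, h⟩

theorem iterate_up_eq_iterate_down (x y : T.V) :
    T.pred^[T.up x y] x = T.pred^[T.down x y] y := by
  obtain ⟨m, n, h⟩ := T.connected x y
  have hup : T.up x y ∈ {m : ℕ | ∃ n, T.pred^[m] x = T.pred^[n] y} :=
    Nat.sInf_mem ⟨m, n, h⟩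
  obtain ⟨n₀, hn₀⟩ := hup
  have hdown : T.down x y ∈ {n : ℕ | ∃ m, T.pred^[n] y = T.pred^[m] x} :=
    Nat.sInf_mem ⟨n₀, _, hn₀.symm⟩
  obtain ⟨m₀, hm₀⟩ := hdown
  have h₁ : T.up x y ≤ m₀ := T.up_le_of_iterate_eq hm₀.symm
  have h₂ : T.down x y ≤ n₀ := T.up_le_of_iterate_eq hn₀.symm
  have h₃ := T.sub_eq_sub_of_iterate_eq hn₀ hm₀.symm
  rwa [show T.down x y = n₀ by omega]

theorem down_eq_of_iterate_up_eq {x y : T.V} {n : ℕ} (h : T.pred^[T.up x y] x = T.pred^[n] y) :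
    T.down x y = n := by
  have := T.sub_eq_sub_of_iterate_eq h (T.iterate_up_eq_iterate_down x y)
  omega

theorem up_down_of_eq_iterate {x y : T.V} {n : ℕ} (h : x = T.pred^[n] y) :
    T.up x y = 0 ∧ T.down x y = n := by
  have hup : T.up x y = 0 := Nat.eq_zero_of_le_zero (T.up_le_of_iterate_eq (m := 0) h)
  exact ⟨hup, T.down_eq_of_iterate_up_eq (by rw [hup]; exact h)⟩

theorem up_down_pred_of_up_eq_succ {x y : T.V} {a : ℕ} (h : T.up x y = a + 1) :
    T.up (T.pred x) y = a ∧ T.down (T.pred x) y = T.down x y := by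
  have hx : T.pred^[a] (T.pred x) = T.pred^[T.down x y] y := by
    show T.pred^[a + 1] x = _
    rw [← h, T.iterate_up_eq_iterate_down]
  have hup : T.up (T.pred x) y = a := by
    refine le_antisymm (T.up_le_of_iterate_eq hx) ?_
    have : T.up x y ≤ T.up (T.pred x) y + 1 :=
      T.up_le_of_iterate_eq (T.iterate_up_eq_iterate_down (T.pred x) y)
    omega
  exact ⟨hup, T.down_eq_of_iterate_up_eq (by rw [hup]; exact hx)⟩

theorem up_down_pred_of_up_eq_zero {x y : T.V} (h : T.up x y = 0) :
    T.up (T.pred x) y = 0 ∧ T.down (T.pred x) y = T.down x y + 1 := by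
  refine T.up_down_of_eq_iterate ?_
  have := T.iterate_up_eq_iterate_down x y
  rw [h, Function.iterate_zero_apply] at this
  rw [Function.iterate_succ_apply']
  exact congrArg T.pred this

theorem up_down_of_pred_eq {x c : T.V} (y : T.V) (hc : T.pred c = x) :
    (T.up c y = T.up x y + 1 ∧ T.down c y = T.down x y) ∨
    (T.up x y = 0 ∧ T.down x y = T.down c y + 1 ∧ T.up c y = 0 ∧
      c = T.pred^[T.down c y] y) := by
  rcases h : T.up c y with _ | a
  · obtain ⟨hx0, hxd⟩ := T.up_down_pred_of_up_eq_zero h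
    have hc' := T.iterate_up_eq_iterate_down c y
    rw [h, Function.iterate_zero_apply] at hc'
    rw [hc] at hx0 hxd
    exact Or.inr ⟨hx0, hxd, rfl, hc'⟩
  · obtain ⟨hxa, hxd⟩ := T.up_down_pred_of_up_eq_succ h
    rw [hc] at hxa hxd
    exact Or.inl ⟨hxa ▸ rfl, hxd.symm⟩

theorem finite_children (hq : q ≠ 0) (x : T.V) : Finite {c : T.V // T.pred c = x} :=
  Nat.finite_of_card_ne_zero (by rw [T.fiber_card]; exact hq)

theorem tsum_treeWalk_mul (hq : q ≠ 0) (α : ℝ) (g : T.V → ℝ) (x : T.V) :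
    ∑' z, treeWalk T α x z * g z
      = (1 - α) * g (T.pred x) + α / q * ∑' c : {c // T.pred c = x}, g c := by
  have hx : T.pred (T.pred x) ≠ x := T.acyclic x 2 two_pos
  have hsplit : ∀ z, treeWalk T α x z * g z =
      (if z = T.pred x then (1 - α) * g (T.pred x) else 0)
        + α / q * {c | T.pred c = x}.indicator g z := by
    intro z
    by_cases hz : T.pred z = x
    · have : z ≠ T.pred x := by rintro rfl; exact hx hz
      simp [treeWalk, hz, this]
    · by_cases hz' : z = T.pred x
      · subst hz'
        simp [treeWalk, hx]
      · simp [treeWalk, hz, hz']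
  have : Finite {c | T.pred c = x} := T.finite_children hq x
  rw [tsum_congr hsplit, Summable.tsum_add (hasSum_ite_eq _ _).summable
    ((summable_subtype_iff_indicator.mp Summable.of_finite).mul_left _), tsum_ite_eq,
    tsum_mul_left, ← tsum_subtype]
  rfl

theorem tsum_children_profile (f : ℕ → ℕ → ℝ) {x y : T.V}
    (h : T.up x y = 0 → T.down x y = 0) :
    ∑' c : {c // T.pred c = x}, f (T.up c y) (T.down c y)
      = q * f (T.up x y + 1) (T.down x y) := by
  have hc : ∀ c : {c // T.pred c = x},
      f (T.up c y) (T.down c y) = f (T.up x y + 1) (T.down x y) := by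
    rintro ⟨c, hc⟩
    rcases T.up_down_of_pred_eq y hc with ⟨hu, hd⟩ | ⟨hu, hd, -, -⟩
    · rw [hu, hd]
    · simp [h hu] at hd
  rw [tsum_congr hc, tsum_const, T.fiber_card, nsmul_eq_mul]

theorem tsum_children_profile_of_ancestor (hq : q ≠ 0) (f : ℕ → ℕ → ℝ) {x y : T.V}
    {n : ℕ} (h0 : T.up x y = 0) (hn : T.down x y = n + 1) :
    ∑' c : {c // T.pred c = x}, f (T.up c y) (T.down c y) = f 0 n + (q - 1) * f 1 (n + 1) := by
  have := T.finite_children hq x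
  have hx : x = T.pred^[n + 1] y := by
    simpa [h0, hn] using T.iterate_up_eq_iterate_down x y
  let c₀ : {c // T.pred c = x} := ⟨T.pred^[n] y, by rw [hx, Function.iterate_succ_apply']⟩
  obtain ⟨hc₀u, hc₀d⟩ := T.up_down_of_eq_iterate (rfl : c₀.1 = _)
  have hc : ∀ c : {c // T.pred c = x}, f (T.up c y) (T.down c y)
      = f 1 (n + 1) + if c = c₀ then f 0 n - f 1 (n + 1) else 0 := by
    rintro ⟨c, hc⟩
    show f (T.up c y) (T.down c y) = _
    rcases T.up_down_of_pred_eq y hc with ⟨hu, hd⟩ | ⟨-, hd, hu, hc'⟩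
    · have : (⟨c, hc⟩ : {c // T.pred c = x}) ≠ c₀ := by
        intro h
        rw [show c = c₀.1 from congrArg Subtype.val h, hc₀u, h0] at hu
        omega
      rw [if_neg this, hu, hd, h0, hn]
      ring
    · have hdc : T.down c y = n := by omega
      rw [if_pos (Subtype.ext (hc'.trans (by rw [hdc]))), hu, hdc]
      ring
  rw [tsum_congr hc, Summable.tsum_add Summable.of_finite Summable.of_finite, tsum_const,
    tsum_ite_eq, T.fiber_card, nsmul_eq_mul]
  ring

theorem tsum_treeWalk_profile (hq : q ≠ 0) {α : ℝ} (f : ℕ → ℕ → ℝ)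
    (h_up : ∀ a n, (1 - α) * f a n + α * f (a + 2) n = f (a + 1) n)
    (h_ray : ∀ n, (1 - α) * f 0 (n + 2) + α / q * f 0 n + (q - 1) * (α / q * f 1 (n + 1))
      = f 0 (n + 1))
    (h_root : (1 - α) * f 0 1 + α * f 1 0 = f 0 0) (y x : T.V) :
    ∑' z, treeWalk T α x z * f (T.up z y) (T.down z y) = f (T.up x y) (T.down x y) := by
  have hcancel : ∀ t, α / q * (q * t) = α * t := fun t => by
    field_simp [Nat.cast_ne_zero.mpr hq]
  rw [T.tsum_treeWalk_mul hq]
  rcases hx : T.up x y with _ | a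
  · obtain ⟨hpu, hpd⟩ := T.up_down_pred_of_up_eq_zero hx
    rw [hpu, hpd]
    rcases hxd : T.down x y with _ | n
    · rw [T.tsum_children_profile f (fun _ => hxd), hx, hxd, hcancel]
      exact h_root
    · rw [T.tsum_children_profile_of_ancestor hq f hx hxd]
      linear_combination h_ray n
  · obtain ⟨hpu, hpd⟩ := T.up_down_pred_of_up_eq_succ hx
    rw [hpu, hpd, T.tsum_children_profile f (fun h => absurd h (by omega)), hx, hcancel]
    exact h_up a _

end TreeWithEnd

noncomputable def sphericalProfile (q β : ℝ) (a n : ℕ) : ℝ :=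
  (β ^ (a + n) / q ^ n) *
    ((q * β⁻¹ + 1) / (q * β⁻¹ ^ 2 - 1)
      + (β ^ (-(a : ℤ)) - 1) / (β⁻¹ - 1)
      + (β ^ (-(n : ℤ)) - 1) / (β⁻¹ - 1))

section

variable {q β α : ℝ}

theorem sphericalProfile_eq (hβ : β ≠ 0) (a n : ℕ) :
    sphericalProfile q β a n =
      (β * (q + β) / (q - β ^ 2) * β ^ (a + n)
        + β / (1 - β) * (β ^ a + β ^ n - 2 * β ^ (a + n))) / q ^ n := by
  have hC : (q * β⁻¹ + 1) / (q * β⁻¹ ^ 2 - 1) = β * (q + β) / (q - β ^ 2) := by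
    rw [show q * β⁻¹ ^ 2 - 1 = (q - β ^ 2) / β ^ 2 by field_simp,
      show q * β⁻¹ + 1 = (q + β) / β by field_simp, div_div_div_eq]
    rcases eq_or_ne (q - β ^ 2) 0 with h | h
    · simp [h]
    · field_simp
  have hs : ∀ x : ℝ, x / (β⁻¹ - 1) = x * (β / (1 - β)) := by
    intro x
    rw [show β⁻¹ - 1 = (1 - β) / β by field_simp, div_div_eq_mul_div, mul_div_assoc]
  rw [sphericalProfile, hC, hs, hs, zpow_neg, zpow_neg, zpow_natCast, zpow_natCast, pow_add]
  field_simp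
  ring

theorem sphericalProfile_up_recurrence (hβ : β ≠ 0) (hα : α * (1 + β) = 1) (a n : ℕ) :
    (1 - α) * sphericalProfile q β a n + α * sphericalProfile q β (a + 2) n
      = sphericalProfile q β (a + 1) n := by
  simp only [sphericalProfile_eq hβ, pow_add]
  linear_combination (β - 1) * β ^ a / q ^ n *
    (β * (q + β) / (q - β ^ 2) * β ^ n + β / (1 - β) * (1 - 2 * β ^ n)) * hα

theorem sphericalProfile_ray_recurrence (hq : q ≠ 0) (hqβ : q - β ^ 2 ≠ 0) (hβ : β ≠ 0)
    (hβ1 : 1 - β ≠ 0) (hα : α * (1 + β) = 1) (n : ℕ) :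
    (1 - α) * sphericalProfile q β 0 (n + 2) + α / q * sphericalProfile q β 0 n
      + (q - 1) * (α / q * sphericalProfile q β 1 (n + 1))
      = sphericalProfile q β 0 (n + 1) := by
  have hβ' : 1 + β ≠ 0 := right_ne_zero_of_mul_eq_one hα
  obtain rfl : α = (1 + β)⁻¹ := eq_inv_of_mul_eq_one_left hα
  simp only [sphericalProfile_eq hβ, pow_add]
  field_simp
  ring

theorem sphericalProfile_root_recurrence (hq : q ≠ 0) (hqβ : q - β ^ 2 ≠ 0) (hβ : β ≠ 0)
    (hβ1 : 1 - β ≠ 0) (hα : α * (1 + β) = 1) :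
    (1 - α) * sphericalProfile q β 0 1 + α * sphericalProfile q β 1 0
      = sphericalProfile q β 0 0 := by
  have hβ' : 1 + β ≠ 0 := right_ne_zero_of_mul_eq_one hα
  obtain rfl : α = (1 + β)⁻¹ := eq_inv_of_mul_eq_one_left hα
  simp only [sphericalProfile_eq hβ, pow_add]
  field_simp
  ring

end

/-- For the random walk `P_{α,q}` on `T_q` with 1/2 < α < 1 and β = (1-α)/α,
the generalized spherical function
φ(x) = (β^{d(x,y)}/q^{∇}) ((qβ⁻¹+1)/(qβ⁻²-1) + (β^{-Δ}-1)/(β⁻¹-1) + (β^{-∇}-1)/(β⁻¹-1))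
is harmonic in x for each fixed y. -/
theorem spherical_harmonic_drift (q : ℕ) (hq : 2 ≤ q) (α : ℝ)
    (hα0 : 1 / 2 < α) (hα1 : α < 1) (β : ℝ) (hβ : β = (1 - α) / α)
    (T : TreeWithEnd q) (y : T.V)
    (φ : T.V → ℝ)
    (hφ : ∀ x, φ x =
      (β ^ (T.up x y + T.down x y) / (q : ℝ) ^ (T.down x y)) *
        ((q * β⁻¹ + 1) / (q * β⁻¹ ^ 2 - 1)
          + (β ^ (-(T.up x y : ℤ)) - 1) / (β⁻¹ - 1)
          + (β ^ (-(T.down x y : ℤ)) - 1) / (β⁻¹ - 1))) :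
    ∀ x, (∑' z, treeWalk T α x z * φ z) = φ x := by
  have hα : α * (1 + β) = 1 := by
    rw [hβ]
    field_simp
    ring
  have hβ0 : 0 < β := by rw [hβ]; exact div_pos (by linarith) (by linarith)
  have hβ1 : β < 1 := by rw [hβ, div_lt_one (by linarith)]; linarith
  have hq2 : (2 : ℝ) ≤ q := by exact_mod_cast hq
  have hq0 : (q : ℝ) ≠ 0 := by positivity
  have hqβ : (q : ℝ) - β ^ 2 ≠ 0 := by nlinarith
  have hβ1' : 1 - β ≠ 0 := by linarith
  obtain rfl : φ = fun x => sphericalProfile q β (T.up x y) (T.down x y) := funext hφ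
  exact T.tsum_treeWalk_profile (by omega) _ (sphericalProfile_up_recurrence hβ0.ne' hα)
    (sphericalProfile_ray_recurrence hq0 hqβ hβ0.ne' hβ1' hα)
    (sphericalProfile_root_recurrence hq0 hqβ hβ0.ne' hβ1' hα) y
end

section
/- Let r ≥ 2 and for positive integers n define f_n(d) = ε_d · (n/(n+d)) · Σ_{m=d}^∞ r^{-m} n²/((n+m)(n+m+1)) for integers d ≥ 0, where ε_0 = 1 and ε_d = (r-1)/r for d ≥ 1. Then f_n(d) is increasing in n, f_n(d) → f(d) as n → ∞ where f(0) = r/(r-1) and f(d) = r^{-d} for d ≥ 1, and Σ_{d=0}^∞ f_n(d) → Σ_{d=0}^∞ f(d) = (r+1)/(r-1). -/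
/-!
Each `f_n(d)` is `ε_d` times a product of factors `n/(n+c)` with `c ≥ 0` and a series of
nonnegative terms each increasing in `n`, so it increases with `n`. Termwise the factors tend
to `1`, and dominated convergence against the geometric tail `Σ_{m ≥ d} r^{-m} = r^{-d} r/(r-1)`
gives `f(d) = ε_d r^{-d} r/(r-1)`. Monotonicity then yields `0 ≤ f_n(d) ≤ f(d)`, and since `f`
is summable (`Σ f = r/(r-1) + 1/(r-1)`), dominated convergence once more passes the limit
through `Σ_d`.
-/

open Filter Topology

def natLeEquiv (d : ℕ) : ℕ ≃ {m : ℕ // d ≤ m} where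
  toFun k := ⟨d + k, Nat.le_add_right d k⟩
  invFun m := m - d
  left_inv k := by simp
  right_inv m := Subtype.ext (Nat.add_sub_cancel' m.2)

theorem hasSum_inv_pow_subtype_le {q : ℝ} (hq : 1 < q) (d : ℕ) :
    HasSum (fun m : {m : ℕ // d ≤ m} => (q ^ (m : ℕ))⁻¹)
      ((q ^ d)⁻¹ * (q / (q - 1))) := by
  have hgeom : HasSum (fun k : ℕ => q⁻¹ ^ k) (q / (q - 1)) := by
    convert hasSum_geometric_of_lt_one (by positivity) (inv_lt_one_of_one_lt₀ hq) using 1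
    field_simp [(sub_pos.2 hq).ne']
  rw [← (natLeEquiv d).hasSum_iff]
  show HasSum (fun k => (q ^ (d + k))⁻¹) _
  simpa only [pow_add, mul_inv, inv_pow] using hgeom.mul_left (q ^ d)⁻¹

theorem natCast_div_add_nonneg {c : ℝ} (hc : 0 ≤ c) (n : ℕ) : 0 ≤ (n : ℝ) / (n + c) := by
  positivity

theorem natCast_div_add_le_one {c : ℝ} (hc : 0 ≤ c) (n : ℕ) : (n : ℝ) / (n + c) ≤ 1 :=
  div_le_one_of_le₀ (le_add_of_nonneg_right hc) (by positivity)

theorem monotone_natCast_div_add {c : ℝ} (hc : 0 ≤ c) :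
    Monotone fun n : ℕ => (n : ℝ) / (n + c) := by
  intro n₁ n₂ h
  have h' : (n₁ : ℝ) ≤ n₂ := by exact_mod_cast h
  rcases (add_nonneg (Nat.cast_nonneg n₁) hc).eq_or_lt with h0 | h0
  · simp only [← h0, div_zero]
    exact natCast_div_add_nonneg hc n₂
  · rw [div_le_div_iff₀ h0 (by linarith)]
    nlinarith

noncomputable def weight (n m : ℕ) : ℝ :=
  (n : ℝ) ^ 2 / (((n : ℝ) + m) * ((n : ℝ) + m + 1))

theorem weight_eq_mul (n m : ℕ) :
    weight n m = (n : ℝ) / (n + (m : ℝ)) * ((n : ℝ) / (n + ((m : ℝ) + 1))) := by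
  rw [weight, div_mul_div_comm, sq, add_assoc]

theorem weight_nonneg (n m : ℕ) : 0 ≤ weight n m := by
  unfold weight; positivity

theorem weight_le_one (n m : ℕ) : weight n m ≤ 1 := by
  rw [weight_eq_mul]
  exact mul_le_one₀ (natCast_div_add_le_one m.cast_nonneg n)
    (natCast_div_add_nonneg (by positivity) n) (natCast_div_add_le_one (by positivity) n)

theorem monotone_weight (m : ℕ) : Monotone fun n => weight n m := by
  simp only [weight_eq_mul]
  exact (monotone_natCast_div_add m.cast_nonneg).mul (monotone_natCast_div_add (by positivity))
    (fun n => natCast_div_add_nonneg m.cast_nonneg n)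
    (fun n => natCast_div_add_nonneg (by positivity) n)

theorem tendsto_weight (m : ℕ) : Tendsto (fun n => weight n m) atTop (𝓝 1) := by
  simp only [weight_eq_mul]
  simpa using
    (tendsto_natCast_div_add_atTop (m : ℝ)).mul (tendsto_natCast_div_add_atTop ((m : ℝ) + 1))

section

variable {q : ℝ}

noncomputable def weightedTail (q : ℝ) (n d : ℕ) : ℝ :=
  ∑' m : {m : ℕ // d ≤ m}, (q ^ (m : ℕ))⁻¹ * weight n m

theorem weightedTail_term_le (hq : 0 < q) (n m : ℕ) :
    (q ^ m)⁻¹ * weight n m ≤ (q ^ m)⁻¹ :=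
  mul_le_of_le_one_right (by positivity) (weight_le_one n m)

theorem summable_weightedTail (hq : 1 < q) (n d : ℕ) :
    Summable fun m : {m : ℕ // d ≤ m} => (q ^ (m : ℕ))⁻¹ * weight n m :=
  (hasSum_inv_pow_subtype_le hq d).summable.of_nonneg_of_le
    (fun m => mul_nonneg (by positivity) (weight_nonneg n m))
    (fun m => weightedTail_term_le (by positivity) n m)

theorem weightedTail_nonneg (hq : 0 < q) (n d : ℕ) : 0 ≤ weightedTail q n d :=
  tsum_nonneg fun m => mul_nonneg (by positivity) (weight_nonneg n m)

theorem monotone_weightedTail (hq : 1 < q) (d : ℕ) : Monotone fun n => weightedTail q n d :=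
  fun _ _ h => (summable_weightedTail hq _ d).tsum_mono (summable_weightedTail hq _ d)
    fun m => mul_le_mul_of_nonneg_left (monotone_weight m h) (by positivity)

theorem tendsto_weightedTail (hq : 1 < q) (d : ℕ) :
    Tendsto (fun n => weightedTail q n d) atTop (𝓝 ((q ^ d)⁻¹ * (q / (q - 1)))) := by
  rw [← (hasSum_inv_pow_subtype_le hq d).tsum_eq]
  refine tendsto_tsum_of_dominated_convergence (hasSum_inv_pow_subtype_le hq d).summable
    (fun m => by simpa using (tendsto_weight m).const_mul (q ^ (m : ℕ))⁻¹) ?_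
  refine Eventually.of_forall fun n m => ?_
  rw [Real.norm_of_nonneg (mul_nonneg (by positivity) (weight_nonneg n m))]
  exact weightedTail_term_le (by positivity) n m

noncomputable def epsilon (q : ℝ) (d : ℕ) : ℝ := if d = 0 then 1 else (q - 1) / q

-- `fApprox q n d` and `fLim q d` are the paper's `f_n(d)` and `f(d)` for `r = q`.
noncomputable def fApprox (q : ℝ) (n d : ℕ) : ℝ :=
  epsilon q d * ((n : ℝ) / (n + d)) * weightedTail q n d

noncomputable def fLim (q : ℝ) (d : ℕ) : ℝ := if d = 0 then q / (q - 1) else (q ^ d)⁻¹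

theorem epsilon_nonneg (hq : 1 < q) (d : ℕ) : 0 ≤ epsilon q d := by
  unfold epsilon
  split_ifs
  · exact zero_le_one
  · exact div_nonneg (by linarith) (by linarith)

theorem fApprox_nonneg (hq : 1 < q) (n d : ℕ) : 0 ≤ fApprox q n d :=
  mul_nonneg (mul_nonneg (epsilon_nonneg hq d) (natCast_div_add_nonneg d.cast_nonneg n))
    (weightedTail_nonneg (by linarith) n d)

theorem monotone_fApprox (hq : 1 < q) (d : ℕ) : Monotone fun n => fApprox q n d :=
  ((monotone_natCast_div_add d.cast_nonneg).const_mul (epsilon_nonneg hq d)).mul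
    (monotone_weightedTail hq d)
    (fun n => mul_nonneg (epsilon_nonneg hq d) (natCast_div_add_nonneg d.cast_nonneg n))
    (fun n => weightedTail_nonneg (by linarith) n d)

theorem tendsto_fApprox (hq : 1 < q) (d : ℕ) :
    Tendsto (fun n => fApprox q n d) atTop (𝓝 (fLim q d)) := by
  have hlim := ((tendsto_natCast_div_add_atTop (d : ℝ)).const_mul
    (epsilon q d)).mul (tendsto_weightedTail hq d)
  have hq0 : q ≠ 0 := by positivity
  have hq1 : q - 1 ≠ 0 := (sub_pos.2 hq).ne'
  have hval : epsilon q d * 1 * ((q ^ d)⁻¹ * (q / (q - 1))) = fLim q d := by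
    unfold epsilon fLim
    split_ifs with hd
    · simp [hd]
    · field_simp
  rw [← hval]
  exact hlim

theorem fApprox_le_fLim (hq : 1 < q) (n d : ℕ) : fApprox q n d ≤ fLim q d :=
  (monotone_fApprox hq d).ge_of_tendsto (tendsto_fApprox hq d) n

theorem hasSum_fLim (hq : 1 < q) : HasSum (fLim q) ((q + 1) / (q - 1)) := by
  have hq1 : q - 1 ≠ 0 := (sub_pos.2 hq).ne'
  have hgeom := (hasSum_geometric_of_lt_one (by positivity) (inv_lt_one_of_one_lt₀ hq)).add
    (hasSum_ite_eq 0 (1 / (q - 1)))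
  convert hgeom using 1
  · funext d
    unfold fLim
    split_ifs with hd
    · subst hd
      field_simp
      ring
    · simp [inv_pow]
  · field_simp

theorem tendsto_tsum_fApprox (hq : 1 < q) :
    Tendsto (fun n => ∑' d, fApprox q n d) atTop (𝓝 ((q + 1) / (q - 1))) := by
  rw [← (hasSum_fLim hq).tsum_eq]
  refine tendsto_tsum_of_dominated_convergence (hasSum_fLim hq).summable (tendsto_fApprox hq) ?_
  refine Eventually.of_forall fun n d => ?_
  rw [Real.norm_of_nonneg (fApprox_nonneg hq n d)]
  exact fApprox_le_fLim hq n d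

end

/-- Asymptotics of the family f_n(d) = ε_d (n/(n+d)) Σ_{m≥d} r^{-m} n²/((n+m)(n+m+1)):
monotone increase in n, pointwise limits f(0) = r/(r-1), f(d) = r^{-d} (d ≥ 1),
and convergence of the sums to (r+1)/(r-1). -/
theorem fn_asymptotics (r : ℕ) (hr : 2 ≤ r)
    (ε : ℕ → ℝ) (hε : ∀ d : ℕ, ε d = if d = 0 then 1 else ((r : ℝ) - 1) / r)
    (f : ℕ → ℕ → ℝ)
    (hf : ∀ (n : ℕ), 1 ≤ n → ∀ (d : ℕ), f n d =
      ε d * ((n : ℝ) / (n + d)) *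
        ∑' m : {m : ℕ // d ≤ m},
          ((r : ℝ) ^ (m : ℕ))⁻¹ * ((n : ℝ) ^ 2 / (((n : ℝ) + m) * ((n : ℝ) + m + 1))))
    (flim : ℕ → ℝ)
    (hflim : ∀ d : ℕ, flim d = if d = 0 then (r : ℝ) / (r - 1) else ((r : ℝ) ^ d)⁻¹) :
    (∀ (d n₁ n₂ : ℕ), 1 ≤ n₁ → n₁ ≤ n₂ → f n₁ d ≤ f n₂ d) ∧
    (∀ d : ℕ, Tendsto (fun n : ℕ => f n d) atTop (nhds (flim d))) ∧
    Tendsto (fun n : ℕ => ∑' d : ℕ, f n d) atTop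
      (nhds (((r : ℝ) + 1) / ((r : ℝ) - 1))) ∧
    (∑' d : ℕ, flim d) = ((r : ℝ) + 1) / ((r : ℝ) - 1) := by
  have hq : (1 : ℝ) < r := by exact_mod_cast hr
  have hf_eq : ∀ n, 1 ≤ n → ∀ d, f n d = fApprox r n d := fun n hn d => by
    rw [hf n hn, hε]; rfl
  have hf_eventually : ∀ᶠ n in atTop, f n = fApprox r n :=
    eventually_atTop.2 ⟨1, fun n hn => funext (hf_eq n hn)⟩
  obtain rfl : flim = fLim r := funext hflim
  refine ⟨fun d n₁ n₂ h₁ h₁₂ => ?_, fun d => ?_, ?_, (hasSum_fLim hq).tsum_eq⟩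
  · rw [hf_eq n₁ h₁, hf_eq n₂ (h₁.trans h₁₂)]
    exact monotone_fApprox hq d h₁₂
  · exact (tendsto_fApprox hq d).congr' (hf_eventually.mono fun n hn => by simp only [hn])
  · exact (tendsto_tsum_fApprox hq).congr' (hf_eventually.mono fun n hn => by simp only [hn])
end
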